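/- arXiv:1305.0226 — 2 statements merged into one kernel-verified Lean document; each statement's English description precedes it below -/
import Mathlib

section
/- Let 0 < p ≤ 1 and let N = ⌊d(1/p − 1)⌋. Then there exists a constant C > 0, depending only on d and p, such that for every r > 0, every (p, ∞, N)-atom a centered at 0 with radius r, and every x ∈ ℝ^d, one has |𝓕a(x)| ≤ C r^{N+1+d(1−1/p)} |x|^{N+1}. -/
/-! The moments of `a` of order `≤ N` vanish, hence so do its integrals against `⟪y, x⟫ ^ k`,
`k ≤ N`, and therefore against the degree-`N` Taylor polynomial `T` of the kernel
`y ↦ exp (-2πi⟪y, x⟫)`. So `𝓕 a x = ∫ a y (exp (-2πi⟪y, x⟫) - T y) dy`, and on the ball of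
radius `r` the Taylor remainder is `O((r ‖x‖) ^ (N + 1))` (Taylor's bound for small arguments,
`|exp (iθ)| = 1` for large ones). Integrating `‖a‖ ≤ |B_r| ^ (-1/p)` over `B_r` leaves
`|B_r| ^ (1 - 1/p) = |B_1| ^ (1 - 1/p) r ^ (d (1 - 1/p))`. -/

open MeasureTheory FourierTransform

noncomputable section

/-- A `(p, ∞, N)`-atom centered at `0` with radius `r > 0`. -/
def IsPAtom (d : ℕ) (p : ℝ) (N : ℕ) (r : ℝ) (a : EuclideanSpace ℝ (Fin d) → ℂ) : Prop :=
  Measurable a ∧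
  (∀ x, x ∉ Metric.closedBall (0 : EuclideanSpace ℝ (Fin d)) r → a x = 0) ∧
  (∀ x, ‖a x‖ ≤
    (volume (Metric.closedBall (0 : EuclideanSpace ℝ (Fin d)) r)).toReal ^ (-(1 / p))) ∧
  (∀ ℓ : Fin d → ℕ, (∑ i, ℓ i) ≤ N →
    ∫ y : EuclideanSpace ℝ (Fin d), a y * ∏ i, (y i : ℂ) ^ ℓ i = 0)

open Finset Metric Real
open scoped RealInnerProductSpace

lemma Complex.norm_exp_sub_sum_range_le_of_re_nonpos {z : ℂ} (hz : z.re ≤ 0) (n : ℕ) :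
    ‖exp z - ∑ m ∈ range (n + 1), z ^ m / m.factorial‖ ≤ (n + 2) * ‖z‖ ^ (n + 1) := by
  rcases le_or_gt ‖z‖ 1 with hz1 | hz1
  · calc ‖exp z - ∑ m ∈ range (n + 1), z ^ m / m.factorial‖
        ≤ ‖z‖ ^ (n + 1) * (((n + 1).succ : ℝ) * (((n + 1).factorial : ℝ) * ((n + 1 : ℕ) : ℝ))⁻¹) :=
          exp_bound hz1 n.succ_pos
      _ ≤ ‖z‖ ^ (n + 1) * (n + 2) := by
          gcongr
          push_cast
          rw [← div_eq_mul_inv, add_assoc, one_add_one_eq_two]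
          refine div_le_self (by positivity) (one_le_mul_of_one_le_of_one_le ?_ (by linarith))
          exact Nat.one_le_cast.mpr (n + 1).factorial_pos
      _ = (n + 2) * ‖z‖ ^ (n + 1) := mul_comm _ _
  · have hterm : ∀ m ∈ range (n + 1), ‖z ^ m / m.factorial‖ ≤ ‖z‖ ^ (n + 1) := fun m hm => by
      rw [norm_div, norm_pow, Complex.norm_natCast]
      calc ‖z‖ ^ m / m.factorial ≤ ‖z‖ ^ m :=
            div_le_self (by positivity) (mod_cast m.factorial_pos)
        _ ≤ ‖z‖ ^ (n + 1) := pow_le_pow_right₀ hz1.le (mem_range.mp hm).le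
    calc ‖exp z - ∑ m ∈ range (n + 1), z ^ m / m.factorial‖
        ≤ ‖exp z‖ + ∑ m ∈ range (n + 1), ‖z ^ m / m.factorial‖ :=
          (norm_sub_le _ _).trans (add_le_add_right (norm_sum_le _ _) _)
      _ ≤ ‖z‖ ^ (n + 1) + (n + 1) * ‖z‖ ^ (n + 1) := by
          gcongr
          · rw [norm_exp]
            exact (Real.exp_le_one_iff.mpr hz).trans (one_le_pow₀ hz1.le)
          · simpa using sum_le_sum hterm
      _ = (n + 2) * ‖z‖ ^ (n + 1) := by ring

lemma IsCompact.integrable_mul_continuous_of_bounded {X : Type*} [TopologicalSpace X]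
    [T2Space X] [MeasurableSpace X] [OpensMeasurableSpace X] {μ : Measure X}
    [IsFiniteMeasureOnCompacts μ] {K : Set X} (hK : IsCompact K) {a g : X → ℂ} {M : ℝ}
    (ha : AEStronglyMeasurable a μ) (h0 : ∀ y ∉ K, a y = 0) (hM : ∀ y, ‖a y‖ ≤ M)
    (hg : Continuous g) : Integrable (fun y => a y * g y) μ := by
  have haK : IntegrableOn a K μ :=
    Measure.integrableOn_of_bounded hK.measure_lt_top.ne ha (ae_of_all _ hM)
  refine (haK.mul_continuousOn hg.continuousOn hK).integrable_of_forall_notMem_eq_zero ?_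
  intro y hy
  simp [h0 y hy]

lemma EuclideanSpace.inner_pow_eq_sum_piAntidiag {ι : Type*} [Fintype ι] [DecidableEq ι]
    (x y : EuclideanSpace ℝ ι) (k : ℕ) :
    ((⟪y, x⟫ : ℝ) : ℂ) ^ k = ∑ ℓ ∈ piAntidiag univ k,
      (Nat.multinomial univ ℓ * ∏ i, (x i : ℂ) ^ ℓ i) * ∏ i, (y i : ℂ) ^ ℓ i := by
  simp only [PiLp.inner_apply, RCLike.inner_apply, conj_trivial, Complex.ofReal_sum,
    Complex.ofReal_mul, sum_pow_eq_sum_piAntidiag]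
  refine sum_congr rfl fun ℓ _ => ?_
  simp only [mul_pow, prod_mul_distrib]
  ring

lemma EuclideanSpace.integral_mul_inner_pow_eq_zero {ι : Type*} [Fintype ι]
    {μ : Measure (EuclideanSpace ℝ ι)} {a : EuclideanSpace ℝ ι → ℂ} {N k : ℕ}
    (hint : ∀ ℓ : ι → ℕ, Integrable (fun y => a y * ∏ i, (y i : ℂ) ^ ℓ i) μ)
    (hmom : ∀ ℓ : ι → ℕ, ∑ i, ℓ i ≤ N → ∫ y, a y * ∏ i, (y i : ℂ) ^ ℓ i ∂μ = 0)
    (hk : k ≤ N) (x : EuclideanSpace ℝ ι) :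
    ∫ y, a y * ((⟪y, x⟫ : ℝ) : ℂ) ^ k ∂μ = 0 := by
  classical
  simp_rw [inner_pow_eq_sum_piAntidiag, mul_sum, mul_left_comm (a _)]
  rw [integral_finsetSum _ fun ℓ _ => (hint ℓ).const_mul _]
  refine sum_eq_zero fun ℓ hℓ => ?_
  rw [integral_const_mul, hmom ℓ ((mem_piAntidiag.mp hℓ).1.le.trans hk), mul_zero]

section Fourier

variable {V : Type*} [NormedAddCommGroup V] [InnerProductSpace ℝ V]

def fourierTaylor (N : ℕ) (x v : V) : ℂ :=
  ∑ m ∈ range (N + 1), (((-2 * π * ⟪v, x⟫ : ℝ) : ℂ) * Complex.I) ^ m / m.factorial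

lemma continuous_fourierTaylor (N : ℕ) (x : V) : Continuous (fourierTaylor N x) := by
  unfold fourierTaylor; fun_prop

lemma norm_exp_sub_fourierTaylor_le {N : ℕ} {r : ℝ} (x : V) {v : V} (hv : ‖v‖ ≤ r) :
    ‖Complex.exp (((-2 * π * ⟪v, x⟫ : ℝ) : ℂ) * Complex.I) - fourierTaylor N x v‖
      ≤ (N + 2) * (2 * π * r * ‖x‖) ^ (N + 1) := by
  have hz : ‖((-2 * π * ⟪v, x⟫ : ℝ) : ℂ) * Complex.I‖ ≤ 2 * π * r * ‖x‖ :=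
    calc _ = 2 * π * |⟪v, x⟫| := by simp [abs_of_pos pi_pos]
      _ ≤ 2 * π * (r * ‖x‖) := by
          gcongr
          exact (abs_real_inner_le_norm v x).trans (by gcongr)
      _ = 2 * π * r * ‖x‖ := by ring
  exact (Complex.norm_exp_sub_sum_range_le_of_re_nonpos (by simp) N).trans (by gcongr)

variable [MeasurableSpace V]

lemma integral_mul_fourierTaylor_eq_zero {μ : Measure V} {a : V → ℂ} {N : ℕ} (x : V)
    (hint : ∀ k ≤ N, Integrable (fun y => a y * ((⟪y, x⟫ : ℝ) : ℂ) ^ k) μ)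
    (hmom : ∀ k ≤ N, ∫ y, a y * ((⟪y, x⟫ : ℝ) : ℂ) ^ k ∂μ = 0) :
    ∫ y, a y * fourierTaylor N x y ∂μ = 0 := by
  have hterm : ∀ m y, (((-2 * π * ⟪y, x⟫ : ℝ) : ℂ) * Complex.I) ^ m / m.factorial
      = ((-2 * π * Complex.I) ^ m / m.factorial) * ((⟪y, x⟫ : ℝ) : ℂ) ^ m := by
    intro m y; push_cast; ring
  have hmem : ∀ {m}, m ∈ range (N + 1) → m ≤ N := fun hm => Nat.lt_succ_iff.mp (mem_range.mp hm)
  simp only [fourierTaylor, hterm, mul_sum, mul_left_comm (a _)]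
  rw [integral_finsetSum _ fun m hm => (hint m (hmem hm)).const_mul _]
  refine sum_eq_zero fun m hm => ?_
  rw [integral_const_mul, hmom m (hmem hm), mul_zero]

variable [FiniteDimensional ℝ V] [BorelSpace V]

theorem Real.norm_fourier_le_of_integral_mul_inner_pow_eq_zero {a : V → ℂ} {r M : ℝ} {N : ℕ}
    (ha : AEStronglyMeasurable a) (h0 : ∀ y ∉ closedBall 0 r, a y = 0) (hM : ∀ y, ‖a y‖ ≤ M)
    (x : V) (hmom : ∀ k ≤ N, ∫ y, a y * ((⟪y, x⟫ : ℝ) : ℂ) ^ k = 0) :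
    ‖𝓕 a x‖ ≤ M * volume.real (closedBall (0 : V) r) * ((N + 2) * (2 * π * r * ‖x‖) ^ (N + 1)) := by
  have hint : ∀ g : V → ℂ, Continuous g → Integrable fun y => a y * g y :=
    fun g hg => (isCompact_closedBall 0 r).integrable_mul_continuous_of_bounded ha h0 hM hg
  have hF : 𝓕 a x = ∫ v, a v *
      (Complex.exp (((-2 * π * ⟪v, x⟫ : ℝ) : ℂ) * Complex.I) - fourierTaylor N x v) := by
    simp_rw [mul_sub]
    rw [integral_sub (hint _ (by fun_prop)) (hint _ (continuous_fourierTaylor N x)),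
      integral_mul_fourierTaylor_eq_zero x (fun k _ => hint _ (by fun_prop)) hmom, sub_zero,
      fourier_eq']
    simp only [smul_eq_mul, mul_comm (Complex.exp _)]
  have hbound : ∀ v ∈ closedBall (0 : V) r,
      ‖a v * (Complex.exp (((-2 * π * ⟪v, x⟫ : ℝ) : ℂ) * Complex.I) - fourierTaylor N x v)‖
        ≤ M * ((N + 2) * (2 * π * r * ‖x‖) ^ (N + 1)) := fun v hv => by
    rw [norm_mul]
    exact mul_le_mul (hM v) (norm_exp_sub_fourierTaylor_le x (mem_closedBall_zero_iff.mp hv))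
      (norm_nonneg _) ((norm_nonneg _).trans (hM 0))
  rw [hF, ← setIntegral_eq_integral_of_forall_compl_eq_zero fun v hv => by simp [h0 v hv],
    mul_right_comm]
  exact norm_setIntegral_le_of_norm_le_const measure_closedBall_lt_top hbound

end Fourier

theorem fourier_atom_pointwise_bound_general (d : ℕ) (p : ℝ)
    (N : ℕ) :
    ∃ C > 0, ∀ (r : ℝ) (a : EuclideanSpace ℝ (Fin d) → ℂ),
      0 < r → IsPAtom d p N r a →
      ∀ x : EuclideanSpace ℝ (Fin d),
        ‖𝓕 a x‖ ≤ C * r ^ ((N : ℝ) + 1 + d * (1 - 1 / p)) * ‖x‖ ^ ((N : ℝ) + 1) := by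
  set c := volume.real (closedBall (0 : EuclideanSpace ℝ (Fin d)) 1)
  have hc : 0 < c :=
    ENNReal.toReal_pos (measure_closedBall_pos _ _ one_pos).ne' measure_closedBall_lt_top.ne
  refine ⟨c ^ (1 - 1 / p) * (N + 2) * (2 * π) ^ (N + 1), by positivity, ?_⟩
  rintro r a hr ⟨ha, h0, hM, hmom⟩ x
  have hF := Real.norm_fourier_le_of_integral_mul_inner_pow_eq_zero ha.aestronglyMeasurable h0 hM x
    fun k hk => EuclideanSpace.integral_mul_inner_pow_eq_zero (fun ℓ =>
      (isCompact_closedBall 0 r).integrable_mul_continuous_of_bounded ha.aestronglyMeasurable h0 hM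
        (by fun_prop)) hmom hk x
  have hvol : volume.real (closedBall (0 : EuclideanSpace ℝ (Fin d)) r) = r ^ d * c := by
    simpa using Measure.addHaar_real_closedBall' volume (0 : EuclideanSpace ℝ (Fin d)) hr.le
  have hMV : (volume (closedBall (0 : EuclideanSpace ℝ (Fin d)) r)).toReal ^ (-(1 / p)) *
      volume.real (closedBall (0 : EuclideanSpace ℝ (Fin d)) r)
        = c ^ (1 - 1 / p) * r ^ ((d : ℝ) * (1 - 1 / p)) := by
    rw [← measureReal_def, hvol, ← Real.rpow_add_one (by positivity),
      Real.mul_rpow (by positivity) hc.le, ← Real.rpow_natCast, ← Real.rpow_mul hr.le]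
    ring_nf
  calc ‖𝓕 a x‖ ≤ _ := hF
    _ = c ^ (1 - 1 / p) * r ^ ((d : ℝ) * (1 - 1 / p)) *
          ((N + 2) * (2 * π * r * ‖x‖) ^ (N + 1)) := by rw [hMV]
    _ = _ := by
      rw [Real.rpow_add hr, show (N : ℝ) + 1 = (N + 1 : ℕ) by push_cast; ring,
        Real.rpow_natCast, Real.rpow_natCast]
      ring

/-- Pointwise estimate for the Fourier transform of an atom:
`|𝓕a(x)| ≤ C r^{N+1+d(1-1/p)} |x|^{N+1}`. -/
theorem fourier_atom_pointwise_bound (d : ℕ) (p : ℝ) (hp0 : 0 < p) (hp1 : p ≤ 1)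
    (N : ℕ) (hN : N = ⌊(d : ℝ) * (1 / p - 1)⌋₊) :
    ∃ C > 0, ∀ (r : ℝ) (a : EuclideanSpace ℝ (Fin d) → ℂ),
      0 < r → IsPAtom d p N r a →
      ∀ x : EuclideanSpace ℝ (Fin d),
        ‖𝓕 a x‖ ≤ C * r ^ ((N : ℝ) + 1 + d * (1 - 1 / p)) * ‖x‖ ^ ((N : ℝ) + 1) :=
  fourier_atom_pointwise_bound_general d p N
end
end

section
/- Let 0 < p ≤ 1, let N = ⌊d(1/p − 1)⌋, and let σ be a real number with σ < d + p(N + 1). Then there exists a constant C > 0, depending only on d, p and σ, such that for every r > 0, every (p, ∞, N)-atom a centered at 0 with radius r, and every ρ > 0, one has ∫_{|ξ|<ρ} |𝓕a(ξ)|^p |ξ|^{−σ} dξ ≤ C r^{p(N+1+d)−d} ρ^{d+p(N+1)−σ}. -/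
open MeasureTheory FourierTransform

noncomputable section

/-!
The vanishing moments allow subtracting from `e^{-2πi⟨y,ξ⟩}` its Taylor polynomial of degree `N`
in `⟨y,ξ⟩`, which gives `|𝓕a(ξ)| ≲ (r|ξ|)^{N+1} ‖a‖₁ ≲ r^{N+1+d(1-1/p)} |ξ|^{N+1}`. Raised to
the power `p`, this leaves the weight `|ξ|^{p(N+1)-σ}`, which is integrable near `0` because
`σ < d + p(N+1)`; by scaling, its integral over `B(0,ρ)` is `ρ^{d+p(N+1)-σ}` times its integral
over the unit ball.
-/

open Metric Module Real
open scoped RealInnerProductSpace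

section NormRpowOnBall

variable {E : Type*} [NormedAddCommGroup E] [NormedSpace ℝ E] [FiniteDimensional ℝ E]
  [MeasurableSpace E] [BorelSpace E] (μ : Measure E) [μ.IsAddHaarMeasure] {α : ℝ}

lemma integrableOn_ball_norm_rpow (hα : -(finrank ℝ E : ℝ) < α) (r : ℝ) :
    IntegrableOn (fun x : E => ‖x‖ ^ α) (ball 0 r) μ := by
  rcases le_or_gt 0 α with hα0 | hα0
  · exact ((continuous_norm.rpow_const fun _ => Or.inr hα0).continuousOn.integrableOn_compact
      (isCompact_closedBall 0 r)).mono_set ball_subset_closedBall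
  · have hd : 1 ≤ finrank ℝ E := by
      have : (0 : ℝ) < finrank ℝ E := by linarith
      exact_mod_cast this
    refine integrableOn_ball_of_norm_le_rpow hd (C := 1) (α := -α) (by linarith)
      (ae_of_all _ fun x => ?_) (continuous_norm.measurable.pow_const α).aestronglyMeasurable
    rw [neg_neg, one_mul, norm_of_nonneg (by positivity)]

lemma setIntegral_ball_norm_rpow {ρ : ℝ} (hρ : 0 < ρ) :
    ∫ x in ball 0 ρ, ‖x‖ ^ α ∂μ =
      ρ ^ ((finrank ℝ E : ℝ) + α) * ∫ x in ball (0 : E) 1, ‖x‖ ^ α ∂μ := by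
  have h := Measure.setIntegral_comp_smul_of_pos μ (fun x : E => ‖x‖ ^ α) (ball 0 1) hρ
  simp only [smul_unitBall_of_pos hρ, norm_smul, norm_of_nonneg hρ.le,
    mul_rpow hρ.le (norm_nonneg _), integral_const_mul, smul_eq_mul] at h
  rw [rpow_add hρ, rpow_natCast, mul_assoc, h]
  field_simp

lemma lintegral_ball_norm_rpow (hα : -(finrank ℝ E : ℝ) < α) {ρ : ℝ} (hρ : 0 < ρ) :
    ∫⁻ x in ball 0 ρ, ENNReal.ofReal (‖x‖ ^ α) ∂μ =
      ENNReal.ofReal (ρ ^ ((finrank ℝ E : ℝ) + α) * ∫ x in ball (0 : E) 1, ‖x‖ ^ α ∂μ) := by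
  rw [← setIntegral_ball_norm_rpow μ hρ, ofReal_integral_eq_lintegral_ofReal
    (integrableOn_ball_norm_rpow μ hα ρ) (ae_of_all _ fun x => rpow_nonneg (norm_nonneg x) α)]

end NormRpowOnBall

lemma norm_exp_ofReal_mul_I_sub_sum_le (t : ℝ) {n : ℕ} (hn : 0 < n) :
    ‖Complex.exp (t * Complex.I) - ∑ k ∈ Finset.range n, (t * Complex.I) ^ k / k.factorial‖ ≤
      (n + 1) * |t| ^ n := by
  have hnorm : ‖(t * Complex.I : ℂ)‖ = |t| := by simp
  rcases le_or_gt |t| 1 with ht | ht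
  · have hfact : (1 : ℝ) ≤ n.factorial * n := by
      exact_mod_cast Nat.one_le_iff_ne_zero.2 (Nat.mul_ne_zero n.factorial_ne_zero hn.ne')
    calc _ ≤ |t| ^ n * (n.succ * ((n.factorial : ℝ) * n)⁻¹) := by
          simpa only [hnorm] using Complex.exp_bound (x := t * Complex.I) (by rwa [hnorm]) hn
      _ ≤ |t| ^ n * (n.succ * 1) := by gcongr; exact inv_le_one_of_one_le₀ hfact
      _ = (n + 1) * |t| ^ n := by push_cast; ring
  · calc _ ≤ ‖Complex.exp (t * Complex.I)‖ +
            ∑ k ∈ Finset.range n, ‖(t * Complex.I) ^ k / k.factorial‖ :=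
          (norm_sub_le _ _).trans (add_le_add_right (norm_sum_le _ _) _)
      _ ≤ 1 + ∑ k ∈ Finset.range n, |t| ^ n := by
          gcongr with k hk
          · rw [Complex.norm_exp_ofReal_mul_I]
          · rw [norm_div, norm_pow, hnorm, Complex.norm_natCast]
            calc |t| ^ k / k.factorial ≤ |t| ^ k :=
                  div_le_self (by positivity) (by exact_mod_cast k.factorial_pos)
              _ ≤ |t| ^ n := pow_le_pow_right₀ ht.le (Finset.mem_range.1 hk).le
      _ ≤ (n + 1) * |t| ^ n := by
          rw [Finset.sum_const, Finset.card_range, nsmul_eq_mul]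
          nlinarith [one_le_pow₀ (n := n) ht.le]

lemma IntegrableOn.integrable_mul_continuous_of_support_subset {X R : Type*}
    [TopologicalSpace X] [T2Space X] [MeasurableSpace X] [OpensMeasurableSpace X] [NormedRing R]
    [SecondCountableTopologyEither X R] {μ : Measure X} {f g : X → R} {K : Set X}
    (hf : IntegrableOn f K μ) (hK : IsCompact K) (hsupp : Function.support f ⊆ K)
    (hg : Continuous g) : Integrable (fun x => f x * g x) μ :=
  (integrableOn_iff_integrable_of_support_subset
    ((Function.support_mul_subset_left f g).trans hsupp)).1
    (hf.mul_continuousOn hg.continuousOn hK)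

section Fourier

variable {V : Type*} [NormedAddCommGroup V] [InnerProductSpace ℝ V] [MeasurableSpace V]
  [BorelSpace V] [FiniteDimensional ℝ V] {f : V → ℂ} {r : ℝ}

theorem norm_fourier_le_of_integral_mul_inner_pow_eq_zero {N : ℕ} (hf : Integrable f)
    (hsupp : Function.support f ⊆ closedBall 0 r) (ξ : V)
    (hmom : ∀ k ≤ N, ∫ y, f y * (⟪y, ξ⟫ : ℂ) ^ k = 0) :
    ‖𝓕 f ξ‖ ≤ (N + 2) * (2 * π * r * ‖ξ‖) ^ (N + 1) * ∫ y, ‖f y‖ := by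
  have hmul : ∀ {g : V → ℂ}, Continuous g → Integrable (fun y => f y * g y) := fun hg =>
    IntegrableOn.integrable_mul_continuous_of_support_subset hf.integrableOn
      (isCompact_closedBall 0 r) hsupp hg
  set t : V → ℝ := fun y => -2 * π * ⟪y, ξ⟫
  have ht : Continuous t := by fun_prop
  set P : V → ℂ := fun y => ∑ k ∈ Finset.range (N + 1), (t y * Complex.I) ^ k / k.factorial
  have hP : ∫ y, f y * P y = 0 := by
    have hexpand : ∀ y, f y * P y = ∑ k ∈ Finset.range (N + 1),
        ((-2 * π * Complex.I) ^ k / k.factorial) * (f y * (⟪y, ξ⟫ : ℂ) ^ k) := by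
      intro y
      simp only [P, t, Finset.mul_sum]
      refine Finset.sum_congr rfl fun k _ => ?_
      push_cast
      ring
    simp only [hexpand]
    rw [integral_finsetSum _ fun k _ => (hmul (by fun_prop)).const_mul _]
    refine Finset.sum_eq_zero fun k hk => ?_
    rw [integral_const_mul, hmom k (Nat.lt_succ_iff.1 (Finset.mem_range.1 hk)), mul_zero]
  have hbound : ∀ y, ‖f y * (Complex.exp (t y * Complex.I) - P y)‖ ≤
      (N + 2) * (2 * π * r * ‖ξ‖) ^ (N + 1) * ‖f y‖ := by
    intro y
    by_cases hy : f y = 0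
    · simp [hy]
    have hty : |t y| ≤ 2 * π * r * ‖ξ‖ := by
      have hyr : ‖y‖ ≤ r := mem_closedBall_zero_iff.1 (hsupp hy)
      calc |t y| = 2 * π * |⟪y, ξ⟫| := by simp [t, abs_mul, abs_of_pos pi_pos]
        _ ≤ 2 * π * (r * ‖ξ‖) := by
          gcongr
          exact (abs_real_inner_le_norm y ξ).trans (by gcongr)
        _ = 2 * π * r * ‖ξ‖ := by ring
    rw [norm_mul, mul_comm]
    gcongr
    calc _ ≤ ((N + 1 : ℕ) + 1) * |t y| ^ (N + 1) :=
          norm_exp_ofReal_mul_I_sub_sum_le (t y) N.succ_pos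
      _ = (N + 2) * |t y| ^ (N + 1) := by push_cast; ring
      _ ≤ (N + 2) * (2 * π * r * ‖ξ‖) ^ (N + 1) := by gcongr
  calc ‖𝓕 f ξ‖ = ‖∫ y, f y * (Complex.exp (t y * Complex.I) - P y)‖ := by
        simp only [mul_sub]
        rw [integral_sub (hmul (by fun_prop)) (hmul (by fun_prop)), hP, sub_zero,
          Real.fourier_eq']
        simp only [smul_eq_mul, mul_comm, t]
    _ ≤ ∫ y, (N + 2) * (2 * π * r * ‖ξ‖) ^ (N + 1) * ‖f y‖ :=
        norm_integral_le_of_norm_le (hf.norm.const_mul _) (ae_of_all _ hbound)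
    _ = (N + 2) * (2 * π * r * ‖ξ‖) ^ (N + 1) * ∫ y, ‖f y‖ := integral_const_mul _ _

end Fourier

theorem integral_mul_inner_pow_eq_zero_of_monomial_moments {ι : Type*} [Fintype ι]
    {f : EuclideanSpace ℝ ι → ℂ} {r : ℝ} {N : ℕ} (hf : Integrable f)
    (hsupp : Function.support f ⊆ closedBall 0 r)
    (hmom : ∀ ℓ : ι → ℕ, ∑ i, ℓ i ≤ N → ∫ y, f y * ∏ i, (y i : ℂ) ^ ℓ i = 0)
    (ξ : EuclideanSpace ℝ ι) {k : ℕ} (hk : k ≤ N) :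
    ∫ y, f y * (⟪y, ξ⟫ : ℂ) ^ k = 0 := by
  classical
  have hexpand : ∀ y : EuclideanSpace ℝ ι, f y * (⟪y, ξ⟫ : ℂ) ^ k =
      ∑ m ∈ Finset.univ.piAntidiag k, (Nat.multinomial Finset.univ m * ∏ i, (ξ i : ℂ) ^ m i) *
        (f y * ∏ i, (y i : ℂ) ^ m i) := by
    intro y
    have hinner : (⟪y, ξ⟫ : ℂ) = ∑ i, (y i : ℂ) * ξ i := by
      simp [PiLp.inner_apply, mul_comm]
    rw [hinner, Finset.sum_pow_eq_sum_piAntidiag, Finset.mul_sum]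
    refine Finset.sum_congr rfl fun m _ => ?_
    simp only [mul_pow, Finset.prod_mul_distrib]
    ring
  simp only [hexpand]
  rw [integral_finsetSum _ fun m _ => (IntegrableOn.integrable_mul_continuous_of_support_subset
    hf.integrableOn (isCompact_closedBall 0 r) hsupp (by fun_prop)).const_mul _]
  refine Finset.sum_eq_zero fun m hm => ?_
  rw [integral_const_mul, hmom m ((Finset.mem_piAntidiag.1 hm).1.trans_le hk), mul_zero]

lemma rpow_mul_rpow_neg_le_of_le_mul_pow {x t c p σ : ℝ} {n : ℕ} (hn : n ≠ 0) (hp : 0 < p)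
    (hx : 0 ≤ x) (ht : 0 ≤ t) (hc : 0 ≤ c) (hxt : x ≤ c * t ^ n) :
    x ^ p * t ^ (-σ) ≤ c ^ p * t ^ (p * n - σ) := by
  rcases ht.eq_or_lt with rfl | ht
  · obtain rfl : x = 0 := le_antisymm (by simpa [hn] using hxt) hx
    rw [zero_rpow hp.ne', zero_mul]
    positivity
  · calc x ^ p * t ^ (-σ) ≤ (c * t ^ n) ^ p * t ^ (-σ) := by gcongr
      _ = c ^ p * t ^ (p * n - σ) := by
        rw [mul_rpow hc (by positivity), ← rpow_natCast, ← rpow_mul ht.le, sub_eq_add_neg,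
          rpow_add ht, mul_comm (n : ℝ) p, mul_assoc]

namespace IsPAtom

variable {d N : ℕ} {p r : ℝ} {a : EuclideanSpace ℝ (Fin d) → ℂ}

lemma support_subset (ha : IsPAtom d p N r a) : Function.support a ⊆ closedBall 0 r :=
  Function.support_subset_iff'.2 ha.2.1

lemma integrable (ha : IsPAtom d p N r a) : Integrable a :=
  (integrableOn_iff_integrable_of_support_subset ha.support_subset).1
    (Measure.integrableOn_of_bounded measure_closedBall_lt_top.ne ha.1.aestronglyMeasurable
      (ae_of_all _ ha.2.2.1))

lemma integral_norm_le (hr : 0 < r) (ha : IsPAtom d p N r a) :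
    ∫ y, ‖a y‖ ≤ (volume (closedBall (0 : EuclideanSpace ℝ (Fin d)) r)).toReal ^ (1 - 1 / p) := by
  set v := (volume (closedBall (0 : EuclideanSpace ℝ (Fin d)) r)).toReal
  have hv : 0 < v :=
    ENNReal.toReal_pos (measure_closedBall_pos _ _ hr).ne' measure_closedBall_lt_top.ne
  calc ∫ y, ‖a y‖ = ∫ y in closedBall 0 r, ‖a y‖ :=
        (setIntegral_eq_integral_of_forall_compl_eq_zero fun y hy => by
          rw [ha.2.1 y hy, norm_zero]).symm
    _ ≤ ∫ _ in closedBall 0 r, v ^ (-(1 / p)) :=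
        setIntegral_mono ha.integrable.norm.integrableOn
          (integrableOn_const measure_closedBall_lt_top.ne) ha.2.2.1
    _ = v ^ (1 - 1 / p) := by
        rw [setIntegral_const, smul_eq_mul, measureReal_def, sub_eq_add_neg, rpow_add hv,
          rpow_one]

theorem exists_norm_fourier_le (d : ℕ) (p : ℝ) (N : ℕ) :
    ∃ K > 0, ∀ (r : ℝ) (a : EuclideanSpace ℝ (Fin d) → ℂ), 0 < r → IsPAtom d p N r a →
      ∀ ξ, ‖𝓕 a ξ‖ ≤ K * r ^ ((N : ℝ) + 1 + d * (1 - 1 / p)) * ‖ξ‖ ^ (N + 1) := by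
  set V := (volume (ball (0 : EuclideanSpace ℝ (Fin d)) 1)).toReal
  have hV : 0 < V := ENNReal.toReal_pos (measure_ball_pos _ _ one_pos).ne' measure_ball_lt_top.ne
  refine ⟨(N + 2) * (2 * π) ^ (N + 1) * V ^ (1 - 1 / p), by positivity,
    fun r a hr ha ξ => ?_⟩
  have hvol : (volume (closedBall (0 : EuclideanSpace ℝ (Fin d)) r)).toReal = r ^ d * V := by
    rw [Measure.addHaar_closedBall _ _ hr.le, ENNReal.toReal_mul,
      ENNReal.toReal_ofReal (by positivity), finrank_euclideanSpace_fin]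
  calc ‖𝓕 a ξ‖ ≤ (N + 2) * (2 * π * r * ‖ξ‖) ^ (N + 1) * ∫ y, ‖a y‖ :=
        norm_fourier_le_of_integral_mul_inner_pow_eq_zero ha.integrable ha.support_subset ξ
          fun _ hk => integral_mul_inner_pow_eq_zero_of_monomial_moments ha.integrable
            ha.support_subset ha.2.2.2 ξ hk
    _ ≤ (N + 2) * (2 * π * r * ‖ξ‖) ^ (N + 1) * (r ^ d * V) ^ (1 - 1 / p) := by
        rw [← hvol]
        gcongr
        exact ha.integral_norm_le hr
    _ = _ := by
        rw [mul_rpow (by positivity) hV.le, ← rpow_natCast r d, ← rpow_mul hr.le,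
          rpow_add hr, rpow_add hr, rpow_one, rpow_natCast r N]
        ring

theorem exists_rpow_norm_fourier_mul_rpow_le (d : ℕ) {p : ℝ} (hp : 0 < p) (N : ℕ) (σ : ℝ) :
    ∃ K > 0, ∀ (r : ℝ) (a : EuclideanSpace ℝ (Fin d) → ℂ), 0 < r → IsPAtom d p N r a →
      ∀ ξ, ‖𝓕 a ξ‖ ^ p * ‖ξ‖ ^ (-σ) ≤
        K * r ^ (p * ((N : ℝ) + 1 + d) - d) * ‖ξ‖ ^ (p * (N + 1) - σ) := by
  obtain ⟨K, hK, hFT⟩ := exists_norm_fourier_le d p N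
  refine ⟨K ^ p, by positivity, fun r a hr ha ξ => ?_⟩
  have h := rpow_mul_rpow_neg_le_of_le_mul_pow (σ := σ) N.succ_ne_zero hp (norm_nonneg _)
    (norm_nonneg _) (by positivity) (hFT r a hr ha ξ)
  rwa [mul_rpow hK.le (by positivity), ← rpow_mul hr.le, Nat.cast_succ,
    show ((N : ℝ) + 1 + d * (1 - 1 / p)) * p = p * ((N : ℝ) + 1 + d) - d by field_simp; ring] at h

end IsPAtom

theorem hardy_low_frequency_estimate_general (d : ℕ) (p σ : ℝ) (hp0 : 0 < p)
    (N : ℕ) (hσ : σ < d + p * (N + 1)) :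
    ∃ C > 0, ∀ (r : ℝ) (a : EuclideanSpace ℝ (Fin d) → ℂ) (ρ : ℝ),
      0 < r → IsPAtom d p N r a → 0 < ρ →
      ∫⁻ ξ in Metric.ball (0 : EuclideanSpace ℝ (Fin d)) ρ,
          ENNReal.ofReal (‖𝓕 a ξ‖ ^ p * ‖ξ‖ ^ (-σ)) ≤
        ENNReal.ofReal (C * r ^ (p * ((N : ℝ) + 1 + d) - d) *
          ρ ^ ((d : ℝ) + p * (N + 1) - σ)) := by
  obtain ⟨K, hK, hpt⟩ := IsPAtom.exists_rpow_norm_fourier_mul_rpow_le d hp0 N σ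
  set α := p * (N + 1) - σ
  set I := ∫ ξ in ball (0 : EuclideanSpace ℝ (Fin d)) 1, ‖ξ‖ ^ α
  have hI : 0 ≤ I := setIntegral_nonneg measurableSet_ball fun ξ _ => by positivity
  -- `I = 0` when `d = 0`, hence the `+ 1`.
  refine ⟨K * (I + 1), by positivity, fun r a ρ hr ha hρ => ?_⟩
  set c := K * r ^ (p * ((N : ℝ) + 1 + d) - d)
  calc ∫⁻ ξ in ball 0 ρ, ENNReal.ofReal (‖𝓕 a ξ‖ ^ p * ‖ξ‖ ^ (-σ))
      ≤ ∫⁻ ξ in ball 0 ρ, ENNReal.ofReal c * ENNReal.ofReal (‖ξ‖ ^ α) :=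
        lintegral_mono fun ξ => by
          rw [← ENNReal.ofReal_mul (by positivity)]
          exact ENNReal.ofReal_le_ofReal (hpt r a hr ha ξ)
    _ = ENNReal.ofReal (c * (ρ ^ ((d : ℝ) + α) * I)) := by
        rw [lintegral_const_mul' _ _ ENNReal.ofReal_ne_top,
          lintegral_ball_norm_rpow _ (by rw [finrank_euclideanSpace_fin]; linarith) hρ,
          finrank_euclideanSpace_fin, ← ENNReal.ofReal_mul (by positivity)]
    _ ≤ ENNReal.ofReal (K * (I + 1) * r ^ (p * ((N : ℝ) + 1 + d) - d) *
          ρ ^ ((d : ℝ) + p * (N + 1) - σ)) := by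
        rw [show (d : ℝ) + α = d + p * (N + 1) - σ by ring]
        refine ENNReal.ofReal_le_ofReal ?_
        have : 0 ≤ c * ρ ^ ((d : ℝ) + p * (N + 1) - σ) := by positivity
        nlinarith

/-- Low-frequency estimate (the term `S₁`): for `σ < d + p(N+1)`,
`∫_{|ξ|<ρ} |𝓕a(ξ)|^p |ξ|^{-σ} dξ ≤ C r^{p(N+1+d)-d} ρ^{d+p(N+1)-σ}`. -/
theorem hardy_low_frequency_estimate (d : ℕ) (p σ : ℝ) (hp0 : 0 < p) (hp1 : p ≤ 1)
    (N : ℕ) (hN : N = ⌊(d : ℝ) * (1 / p - 1)⌋₊)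
    (hσ : σ < d + p * (N + 1)) :
    ∃ C > 0, ∀ (r : ℝ) (a : EuclideanSpace ℝ (Fin d) → ℂ) (ρ : ℝ),
      0 < r → IsPAtom d p N r a → 0 < ρ →
      ∫⁻ ξ in Metric.ball (0 : EuclideanSpace ℝ (Fin d)) ρ,
          ENNReal.ofReal (‖𝓕 a ξ‖ ^ p * ‖ξ‖ ^ (-σ)) ≤
        ENNReal.ofReal (C * r ^ (p * ((N : ℝ) + 1 + d) - d) *
          ρ ^ ((d : ℝ) + p * (N + 1) - σ)) :=
  hardy_low_frequency_estimate_general d p σ hp0 N hσ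
end
end
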